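/- Let (E, F) be a resistance form on a set X whose resistance metric R is complete and such that (X,R) is doubling. Then for every u ∈ F there exists a sequence {u_n}_{n≥0} ⊆ F ∩ C₀(X,R) such that supp(u_n) ⊆ supp(u) for every n and lim_{n→∞} E(u − u_n, u − u_n) = 0, where C₀(X,R) is the space of continuous real-valued functions on (X,R) with compact support and supp(u) := cl({x ∈ X : u(x) ≠ 0}). -/

import Mathlib

open Filter Set Metric
open scoped ENNReal Topology

/-- A resistance form `(E, F)` on a set `X` (Kigami):
`F` is a linear subspace of the real-valued functions on `X`, `E` is a nonnegative
symmetric bilinear form on `F` such that (RF1) constants belong to `F` and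
`E(u,u) = 0` iff `u` is constant, (RF2) the quotient of `F` by the constants is a
Hilbert space under `E` (stated as completeness of the `E`-seminorm on `F`),
(RF3) points of `X` are separated by `F`, (RF4) for `x ≠ y` the quantity
`R(x,y) = (inf {E(u,u) : u ∈ F, u x = 1, u y = 0})⁻¹` is finite (i.e. the infimum
is positive; an admissible `u` always exists), and (RF5) the Markov property holds
for the unit truncation. -/
structure ResistanceForm (X : Type*) where
  F : Set (X → ℝ)
  E : (X → ℝ) → (X → ℝ) → ℝ
  zero_mem : (0 : X → ℝ) ∈ F
  add_mem : ∀ {u v : X → ℝ}, u ∈ F → v ∈ F → u + v ∈ F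
  smul_mem : ∀ (c : ℝ) {u : X → ℝ}, u ∈ F → c • u ∈ F
  const_mem : ∀ c : ℝ, (fun _ => c) ∈ F
  symm : ∀ u ∈ F, ∀ v ∈ F, E u v = E v u
  add_left : ∀ u ∈ F, ∀ v ∈ F, ∀ w ∈ F, E (u + v) w = E u w + E v w
  smul_left : ∀ (c : ℝ), ∀ u ∈ F, ∀ v ∈ F, E (c • u) v = c * E u v
  nonneg : ∀ u ∈ F, 0 ≤ E u u
  null_iff_const : ∀ u ∈ F, (E u u = 0 ↔ ∃ c : ℝ, ∀ x, u x = c)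
  complete : ∀ u : ℕ → (X → ℝ), (∀ n, u n ∈ F) →
    (∀ ε : ℝ, 0 < ε → ∃ N : ℕ, ∀ m ≥ N, ∀ n ≥ N, E (u m - u n) (u m - u n) < ε) →
    ∃ v ∈ F, ∀ ε : ℝ, 0 < ε → ∃ N : ℕ, ∀ n ≥ N, E (v - u n) (v - u n) < ε
  sep : ∀ x y : X, x ≠ y → ∃ u ∈ F, u x ≠ u y
  exists_unit : ∀ x y : X, x ≠ y → ∃ u ∈ F, u x = 1 ∧ u y = 0
  inf_pos : ∀ x y : X, x ≠ y →
    0 < sInf {e : ℝ | ∃ u ∈ F, u x = 1 ∧ u y = 0 ∧ E u u = e}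
  markov : ∀ u ∈ F, (fun x => max 0 (min 1 (u x))) ∈ F ∧
    E (fun x => max 0 (min 1 (u x))) (fun x => max 0 (min 1 (u x))) ≤ E u u

namespace ResistanceForm

variable {X : Type*}

open Classical in
/-- The resistance metric `R` associated with a resistance form:
`R(x,x) = 0` and `R(x,y) = (inf {E(u,u) : u ∈ F, u x = 1, u y = 0})⁻¹` for `x ≠ y`. -/
noncomputable def rmetric (rf : ResistanceForm X) (x y : X) : ℝ :=
  if x = y then 0
  else (sInf {e : ℝ | ∃ u ∈ rf.F, u x = 1 ∧ u y = 0 ∧ rf.E u u = e})⁻¹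

open Classical in
/-- The resistance `𝓡(A,B)` between two sets: the reciprocal of the minimal energy of
functions that are `≡ 1` on `A` and `≡ 0` on `B` if such functions exist, `0` if no
such function exists, and `∞` if `A` or `B` is empty. -/
noncomputable def setRes (rf : ResistanceForm X) (A B : Set X) : ℝ≥0∞ :=
  if A.Nonempty ∧ B.Nonempty then
    (if ∃ u ∈ rf.F, (∀ x ∈ A, u x = 1) ∧ (∀ x ∈ B, u x = 0) then
      (ENNReal.ofReal
        (sInf {e : ℝ | ∃ u ∈ rf.F, (∀ x ∈ A, u x = 1) ∧ (∀ x ∈ B, u x = 0) ∧ rf.E u u = e}))⁻¹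
    else 0)
  else ⊤

end ResistanceForm

/-- A distance function `ρ` on `X` is doubling: there is `N ∈ ℕ` such that every ball of
radius `2r` is covered by `N` balls of radius `r`. -/
def DoublingOf {X : Type*} (ρ : X → X → ℝ) : Prop :=
  ∃ N : ℕ, ∀ (x : X) (r : ℝ), ∃ s : Finset X, s.card ≤ N ∧
    {y : X | ρ x y < 2 * r} ⊆ ⋃ z ∈ s, {y : X | ρ z y < r}

/-- A distance function `ρ` on `X` is uniformly perfect: there is `γ > 1` such that
`B(x, γ r) \ B(x, r) ≠ ∅` whenever `B(x,r)` is not the whole space. -/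
def UniformlyPerfectOf {X : Type*} (ρ : X → X → ℝ) : Prop :=
  ∃ γ : ℝ, 1 < γ ∧ ∀ (x : X) (r : ℝ), 0 < r → {y : X | ρ x y < r} ≠ Set.univ →
    ({y : X | ρ x y < γ * r} \ {y : X | ρ x y < r}).Nonempty

/-!
Energy controls oscillation: `(u x - u y)² ≤ E(u) R(x, y)`. Hence, for a sequence of bounded
energy converging pointwise, near-minimizers of the energy on the convex hulls of its tails form,
by the parallelogram law, an energy-Cauchy sequence whose limit differs from the pointwise limit
by a constant (a form of Mazur's lemma). Applied to `max 0 (min n u)` together with the Markov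
property, this shows that `F` is a lattice with `E(f ⊓ g) + E(f ⊔ g) ≤ E(f) + E(g)`.

Doubling gives cutoffs `φ` with `φ x₀ = 1`, support in the ball of radius `ρ` and `E(φ) ≲ 1/ρ`:
on each dyadic annulus around `x₀`, take the minimum of near-optimal functions for `R(x₀, y)` over a
finite cover by balls of comparable radius, then let the number of annuli grow. Clipping `u` to
`[-a φ, a φ]` with `ρ ≍ a²` gives compactly supported functions of bounded energy that converge
pointwise to `u`, and Mazur's lemma turns them into the approximating sequence.
-/

lemma tendsto_apply_of_mem_convexHull {X : Type*} {v w : ℕ → X → ℝ} {x : X} {l : ℝ}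
    (hv : Tendsto (fun m => v m x) atTop (𝓝 l))
    (hw : ∀ n, w n ∈ convexHull ℝ (v '' Ici n)) : Tendsto (fun n => w n x) atTop (𝓝 l) := by
  rw [Metric.tendsto_atTop] at hv ⊢
  intro ε hε
  obtain ⟨N, hN⟩ := hv (ε / 2) (half_pos hε)
  refine ⟨N, fun n hn => ?_⟩
  have hsub : convexHull ℝ (v '' Ici n)
      ⊆ LinearMap.proj (R := ℝ) (φ := fun _ : X => ℝ) x ⁻¹' closedBall l (ε / 2) :=
    convexHull_min (by rintro _ ⟨m, hm, rfl⟩; exact (hN m (hn.trans hm)).le)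
      ((convex_closedBall l _).linear_preimage _)
  exact (hsub (hw n)).trans_lt (half_lt_self hε)

lemma exists_eq_add_const {X : Type*} {f g : X → ℝ} (h : ∀ x y, f x - g x = f y - g y) :
    ∃ c : ℝ, f = g + fun _ => c := by
  rcases isEmpty_or_nonempty X with hX | ⟨⟨x₀⟩⟩
  · exact ⟨0, funext isEmptyElim⟩
  · exact ⟨f x₀ - g x₀, funext fun x => by simp [← h x x₀]⟩

lemma exists_finset_cover_pow {X : Type*} [MetricSpace X] {N : ℕ}
    (hN : ∀ (x : X) (r : ℝ), ∃ s : Finset X, s.card ≤ N ∧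
      {y | dist x y < 2 * r} ⊆ ⋃ z ∈ s, {y | dist z y < r}) (j : ℕ) (x : X) (r : ℝ) :
    ∃ s : Finset X, s.card ≤ N ^ j ∧ {y | dist x y < 2 ^ j * r} ⊆ ⋃ z ∈ s, {y | dist z y < r} := by
  classical
  induction j generalizing x with
  | zero => exact ⟨{x}, by simp, by simp⟩
  | succ j ih =>
    obtain ⟨s₀, hs₀, hcov₀⟩ := hN x (2 ^ j * r)
    choose t ht hcov using ih
    refine ⟨s₀.biUnion t, ?_, fun y hy => ?_⟩
    · calc (s₀.biUnion t).card ≤ ∑ z ∈ s₀, (t z).card := Finset.card_biUnion_le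
        _ ≤ s₀.card * N ^ j := by simpa using Finset.sum_le_card_nsmul s₀ _ _ fun z _ => ht z
        _ ≤ N ^ (j + 1) := by rw [pow_succ']; exact Nat.mul_le_mul_right _ hs₀
    · have hy' : dist x y < 2 * (2 ^ j * r) := by rw [← mul_assoc, ← pow_succ']; exact hy
      obtain ⟨z, hz, hzy⟩ := mem_iUnion₂.1 (hcov₀ hy')
      obtain ⟨w, hw, hwy⟩ := mem_iUnion₂.1 (hcov z hzy)
      exact mem_iUnion₂.2 ⟨w, Finset.mem_biUnion.2 ⟨z, hz, hw⟩, hwy⟩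

lemma properSpace_of_doublingOf {X : Type*} [MetricSpace X] [CompleteSpace X]
    (hdb : DoublingOf fun x y : X => dist x y) : ProperSpace X := by
  obtain ⟨N, hN⟩ := hdb
  refine ⟨fun x r => isCompact_iff_totallyBounded_isComplete.2
    ⟨Metric.totallyBounded_iff.2 fun ε hε => ?_, isClosed_closedBall.isComplete⟩⟩
  obtain ⟨j, hj⟩ := pow_unbounded_of_one_lt (r / ε) one_lt_two
  obtain ⟨s, -, hs⟩ := exists_finset_cover_pow hN j x ε
  refine ⟨s, s.finite_toSet, fun y hy => ?_⟩
  have hxy : dist x y < 2 ^ j * ε := by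
    rw [div_lt_iff₀ hε] at hj
    rw [dist_comm]
    exact (mem_closedBall.1 hy).trans_lt hj
  obtain ⟨z, hz, hzy⟩ := mem_iUnion₂.1 (hs hxy)
  exact mem_iUnion₂.2 ⟨z, hz, by rwa [mem_ball, dist_comm]⟩

namespace ResistanceForm

variable {X : Type*} (rf : ResistanceForm X) {u v w : X → ℝ}

lemma neg_mem (hu : u ∈ rf.F) : -u ∈ rf.F := by
  simpa using rf.smul_mem (-1) hu

lemma sub_mem (hu : u ∈ rf.F) (hv : v ∈ rf.F) : u - v ∈ rf.F := by
  simpa [sub_eq_add_neg] using rf.add_mem hu (rf.neg_mem hv)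

lemma convex_F : Convex ℝ rf.F := fun _ hu _ hv a b _ _ _ =>
  rf.add_mem (rf.smul_mem a hu) (rf.smul_mem b hv)

lemma E_add_right (hu : u ∈ rf.F) (hv : v ∈ rf.F) (hw : w ∈ rf.F) :
    rf.E u (v + w) = rf.E u v + rf.E u w := by
  rw [rf.symm u hu _ (rf.add_mem hv hw), rf.add_left v hv w hw u hu, rf.symm v hv u hu,
    rf.symm w hw u hu]

lemma E_smul_right (c : ℝ) (hu : u ∈ rf.F) (hv : v ∈ rf.F) :
    rf.E u (c • v) = c * rf.E u v := by
  rw [rf.symm u hu _ (rf.smul_mem c hv), rf.smul_left c v hv u hu, rf.symm v hv u hu]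

lemma E_sub_left (hu : u ∈ rf.F) (hv : v ∈ rf.F) (hw : w ∈ rf.F) :
    rf.E (u - v) w = rf.E u w - rf.E v w := by
  rw [sub_eq_add_neg, ← neg_one_smul ℝ v, rf.add_left u hu _ (rf.smul_mem (-1) hv) w hw,
    rf.smul_left (-1) v hv w hw]
  ring

lemma E_sub_right (hu : u ∈ rf.F) (hv : v ∈ rf.F) (hw : w ∈ rf.F) :
    rf.E u (v - w) = rf.E u v - rf.E u w := by
  rw [rf.symm u hu _ (rf.sub_mem hv hw), rf.E_sub_left hv hw hu, rf.symm v hv u hu,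
    rf.symm w hw u hu]

lemma E_add_self (hu : u ∈ rf.F) (hv : v ∈ rf.F) :
    rf.E (u + v) (u + v) = rf.E u u + 2 * rf.E u v + rf.E v v := by
  rw [rf.add_left u hu v hv _ (rf.add_mem hu hv), rf.E_add_right hu hu hv,
    rf.E_add_right hv hu hv, rf.symm v hv u hu]
  ring

lemma E_sub_self (hu : u ∈ rf.F) (hv : v ∈ rf.F) :
    rf.E (u - v) (u - v) = rf.E u u - 2 * rf.E u v + rf.E v v := by
  rw [rf.E_sub_left hu hv (rf.sub_mem hu hv), rf.E_sub_right hu hu hv,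
    rf.E_sub_right hv hu hv, rf.symm v hv u hu]
  ring

lemma E_smul_self (c : ℝ) (hu : u ∈ rf.F) : rf.E (c • u) (c • u) = c ^ 2 * rf.E u u := by
  rw [rf.smul_left c u hu _ (rf.smul_mem c hu), rf.E_smul_right c hu hu]
  ring

lemma E_sq_le (hu : u ∈ rf.F) (hv : v ∈ rf.F) : rf.E u v ^ 2 ≤ rf.E u u * rf.E v v := by
  have hquad : ∀ t : ℝ, 0 ≤ rf.E v v * (t * t) + 2 * rf.E u v * t + rf.E u u := fun t => by
    have h := rf.nonneg _ (rf.add_mem hu (rf.smul_mem t hv))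
    rw [rf.E_add_self hu (rf.smul_mem t hv), rf.E_smul_right t hu hv, rf.E_smul_self t hv] at h
    linarith
  have := discrim_le_zero hquad
  rw [discrim] at this
  linarith

lemma E_const_self (c : ℝ) : rf.E (fun _ => c) (fun _ => c) = 0 :=
  (rf.null_iff_const _ (rf.const_mem c)).2 ⟨c, fun _ => rfl⟩

lemma E_const_left (c : ℝ) (hv : v ∈ rf.F) : rf.E (fun _ => c) v = 0 := by
  have := rf.E_sq_le (rf.const_mem c) hv
  rw [rf.E_const_self, zero_mul] at this
  exact pow_eq_zero_iff two_ne_zero |>.1 (le_antisymm this (sq_nonneg _))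

lemma E_add_const_self (hu : u ∈ rf.F) (c : ℝ) :
    rf.E (u + fun _ => c) (u + fun _ => c) = rf.E u u := by
  rw [rf.E_add_self hu (rf.const_mem c), rf.symm u hu _ (rf.const_mem c), rf.E_const_left c hu,
    rf.E_const_self]
  ring

lemma convex_setOf_E_le (C : ℝ) : Convex ℝ {f | f ∈ rf.F ∧ rf.E f f ≤ C} := by
  rintro f ⟨hf, hfC⟩ g ⟨hg, hgC⟩ a b ha hb hab
  have hf' := rf.smul_mem a hf
  have hg' := rf.smul_mem b hg
  refine ⟨rf.add_mem hf' hg', ?_⟩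
  have hfg : 2 * rf.E f g ≤ rf.E f f + rf.E g g := by
    have := rf.nonneg _ (rf.sub_mem hf hg)
    rw [rf.E_sub_self hf hg] at this
    linarith
  rw [rf.E_add_self hf' hg', rf.E_smul_self a hf, rf.E_smul_self b hg, rf.smul_left a f hf _ hg',
    rf.E_smul_right b hf hg]
  obtain rfl : b = 1 - a := by linarith
  nlinarith [mul_le_mul_of_nonneg_left hfg (mul_nonneg ha hb)]

lemma tendsto_E_zero_of_tendsto_E_self_zero {g : X → ℝ} {d : ℕ → X → ℝ} (hg : g ∈ rf.F)
    (hd : ∀ n, d n ∈ rf.F) (hlim : Tendsto (fun n => rf.E (d n) (d n)) atTop (𝓝 0)) :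
    Tendsto (fun n => rf.E g (d n)) atTop (𝓝 0) := by
  refine squeeze_zero_norm (fun n => ?_) (a := fun n => √(rf.E g g * rf.E (d n) (d n))) ?_
  · rw [Real.norm_eq_abs, ← Real.sqrt_sq_eq_abs]
    exact Real.sqrt_le_sqrt (rf.E_sq_le hg (hd n))
  · simpa using (hlim.const_mul (rf.E g g)).sqrt

lemma tendsto_E_of_tendsto_E_sub {g : X → ℝ} {w : ℕ → X → ℝ} (hg : g ∈ rf.F)
    (hw : ∀ n, w n ∈ rf.F) (hlim : Tendsto (fun n => rf.E (g - w n) (g - w n)) atTop (𝓝 0)) :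
    Tendsto (fun n => rf.E (w n) (w n)) atTop (𝓝 (rf.E g g)) := by
  have hd := fun n => rf.sub_mem hg (hw n)
  have hexp : ∀ n, rf.E (w n) (w n)
      = rf.E g g - 2 * rf.E g (g - w n) + rf.E (g - w n) (g - w n) := fun n => by
    rw [← rf.E_sub_self hg (hd n), sub_sub_cancel]
  simp_rw [hexp]
  simpa using (tendsto_const_nhds.sub
    ((rf.tendsto_E_zero_of_tendsto_E_self_zero hg hd hlim).const_mul 2)).add hlim

lemma exists_tendsto_of_cauchy {w : ℕ → X → ℝ} (hw : ∀ n, w n ∈ rf.F) {b : ℕ → ℝ}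
    (hb : Tendsto b atTop (𝓝 0))
    (hcauchy : ∀ n, ∀ p ≥ n, ∀ q ≥ n, rf.E (w p - w q) (w p - w q) ≤ b n) :
    ∃ g ∈ rf.F, Tendsto (fun n => rf.E (g - w n) (g - w n)) atTop (𝓝 0) := by
  obtain ⟨g, hg, hconv⟩ := rf.complete w hw fun ε hε => by
    obtain ⟨N, hN⟩ := eventually_atTop.1 (hb.eventually (gt_mem_nhds hε))
    exact ⟨N, fun p hp q hq => (hcauchy N p hp q hq).trans_lt (hN N le_rfl)⟩
  refine ⟨g, hg, Metric.tendsto_atTop.2 fun ε hε => ?_⟩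
  obtain ⟨N, hN⟩ := hconv ε hε
  refine ⟨N, fun n hn => ?_⟩
  rw [Real.dist_eq, sub_zero, abs_of_nonneg (rf.nonneg _ (rf.sub_mem hg (hw n)))]
  exact hN n hn

lemma exists_tendsto_of_antitone_convex {K : ℕ → Set (X → ℝ)} (hK : Antitone K)
    (hconv : ∀ n, Convex ℝ (K n)) (hKF : ∀ n, K n ⊆ rf.F) (hne : ∀ n, (K n).Nonempty)
    {C : ℝ} (hC : ∀ n, ∀ f ∈ K n, rf.E f f ≤ C) :
    ∃ w : ℕ → X → ℝ, (∀ n, w n ∈ K n) ∧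
      ∃ g ∈ rf.F, Tendsto (fun n => rf.E (g - w n) (g - w n)) atTop (𝓝 0) := by
  set d : ℕ → ℝ := fun n => sInf ((fun f => rf.E f f) '' K n)
  have hbdd : ∀ n, BddBelow ((fun f => rf.E f f) '' K n) := fun n =>
    ⟨0, by rintro _ ⟨f, hf, rfl⟩; exact rf.nonneg f (hKF n hf)⟩
  have hd_le : ∀ n, ∀ f ∈ K n, d n ≤ rf.E f f := fun n f hf => csInf_le (hbdd n) ⟨f, hf, rfl⟩
  have hd_mono : Monotone d := fun m n hmn =>
    csInf_le_csInf (hbdd m) ((hne n).image _) (image_mono (hK hmn))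
  have hd_bdd : BddAbove (range d) := ⟨C, by
    rintro _ ⟨n, rfl⟩
    obtain ⟨f, hf⟩ := hne n
    exact (hd_le n f hf).trans (hC n f hf)⟩
  have hw : ∀ n : ℕ, ∃ f ∈ K n, rf.E f f < d n + 1 / (n + 1) := fun n => by
    obtain ⟨_, ⟨f, hf, rfl⟩, hlt⟩ := exists_lt_of_csInf_lt ((hne n).image _)
      (lt_add_of_pos_right (d n) Nat.one_div_pos_of_nat)
    exact ⟨f, hf, hlt⟩
  choose w hwK hwE using hw
  have hwF := fun n => hKF n (hwK n)
  set L := ⨆ n, d n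
  refine ⟨w, hwK, rf.exists_tendsto_of_cauchy hwF
    (b := fun n => 4 * (L - d n + 1 / (n + 1))) ?_ fun n p hp q hq => ?_⟩
  · simpa [L] using (((tendsto_const_nhds (x := L)).sub (tendsto_atTop_ciSup hd_mono hd_bdd)).add
      tendsto_one_div_add_atTop_nhds_zero_nat).const_mul 4
  -- parallelogram law, with the midpoint of `w p` and `w q` in `K n`
  have hmid := hconv n (hK hp (hwK p)) (hK hq (hwK q)) (by norm_num : (0 : ℝ) ≤ 1 / 2)
    (by norm_num : (0 : ℝ) ≤ 1 / 2) (by norm_num)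
  rw [← smul_add] at hmid
  have hmid_le := hd_le n _ hmid
  have hpar := rf.E_sub_self (hwF p) (hwF q)
  rw [rf.E_smul_self _ (rf.add_mem (hwF p) (hwF q)), rf.E_add_self (hwF p) (hwF q)] at hmid_le
  have hp' := Nat.one_div_le_one_div (α := ℝ) hp
  have hq' := Nat.one_div_le_one_div (α := ℝ) hq
  linarith [hwE p, hwE q, le_ciSup hd_bdd p, le_ciSup hd_bdd q]

lemma rmetric_nonneg (x y : X) : 0 ≤ rf.rmetric x y := by
  unfold rmetric
  split_ifs with h
  · rfl
  · exact (inv_pos.2 (rf.inf_pos x y h)).le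

lemma sq_sub_le_E_mul_rmetric (hu : u ∈ rf.F) (x y : X) :
    (u x - u y) ^ 2 ≤ rf.E u u * rf.rmetric x y := by
  rcases eq_or_ne (u x) (u y) with heq | hne
  · simpa [heq] using mul_nonneg (rf.nonneg u hu) (rf.rmetric_nonneg x y)
  have hxy : x ≠ y := fun h => hne (h ▸ rfl)
  set S := {e : ℝ | ∃ v ∈ rf.F, v x = 1 ∧ v y = 0 ∧ rf.E v v = e}
  have hS : 0 < sInf S := rf.inf_pos x y hxy
  have hR : rf.rmetric x y = (sInf S)⁻¹ := if_neg hxy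
  set a := u x - u y
  have ha : a ≠ 0 := sub_ne_zero.2 hne
  -- the normalized function `(u - u y) / a` is admissible for `R(x, y)`
  have hmem : (a⁻¹) ^ 2 * rf.E u u ∈ S := by
    refine ⟨a⁻¹ • (u + fun _ => -u y), rf.smul_mem _ (rf.add_mem hu (rf.const_mem _)), ?_, ?_, ?_⟩
    · simp [← sub_eq_add_neg, ha, a]
    · simp
    · rw [rf.E_smul_self _ (rf.add_mem hu (rf.const_mem _)), rf.E_add_const_self hu]
  have hle := csInf_le ⟨0, by rintro _ ⟨v, hv, -, -, rfl⟩; exact rf.nonneg v hv⟩ hmem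
  rw [hR, le_mul_inv_iff₀ hS]
  calc a ^ 2 * sInf S ≤ a ^ 2 * ((a⁻¹) ^ 2 * rf.E u u) := by gcongr
    _ = rf.E u u := by field_simp

lemma exists_bump {x y : X} (hxy : x ≠ y) :
    ∃ q ∈ rf.F, q x = 1 ∧ (∀ z, 0 ≤ q z) ∧ rf.E q q ≤ 8 / rf.rmetric x y ∧
      ∀ z, 8 * rf.rmetric z y ≤ rf.rmetric x y → q z = 0 := by
  set S := {e : ℝ | ∃ v ∈ rf.F, v x = 1 ∧ v y = 0 ∧ rf.E v v = e}
  have hS : 0 < sInf S := rf.inf_pos x y hxy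
  have hR : rf.rmetric x y = (sInf S)⁻¹ := if_neg hxy
  obtain ⟨h₀, h₀F, h₀x, h₀y⟩ := rf.exists_unit x y hxy
  obtain ⟨_, ⟨h, hF, hx, hy, rfl⟩, hE⟩ :=
    exists_lt_of_csInf_lt (⟨_, h₀, h₀F, h₀x, h₀y, rfl⟩ : S.Nonempty) (lt_two_mul_self hS)
  -- by Hölder, the near-optimal `h` is `≤ 1/2` near `y`, where `q` therefore vanishes
  set p : X → ℝ := (2 : ℝ) • h + fun _ => -1
  have hpF : p ∈ rf.F := rf.add_mem (rf.smul_mem 2 hF) (rf.const_mem _)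
  refine ⟨fun z => max 0 (min 1 (p z)), (rf.markov p hpF).1, by norm_num [p, hx],
    fun z => le_max_left _ _, ?_, fun z hz => ?_⟩
  · have hEp : rf.E p p = 4 * rf.E h h := by
      rw [rf.E_add_const_self (rf.smul_mem 2 hF), rf.E_smul_self 2 hF]
      norm_num
    rw [hR, div_inv_eq_mul]
    linarith [(rf.markov p hpF).2]
  · have hhol := rf.sq_sub_le_E_mul_rmetric hF z y
    rw [hy, sub_zero] at hhol
    have hzy : sInf S * rf.rmetric z y ≤ 1 / 8 := by
      have := mul_le_mul_of_nonneg_left hz hS.le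
      rw [hR, mul_inv_cancel₀ hS.ne'] at this
      linarith
    have : h z ^ 2 ≤ 1 / 4 := by
      nlinarith [mul_le_mul_of_nonneg_right hE.le (rf.rmetric_nonneg z y)]
    have : h z ≤ 1 / 2 := by nlinarith
    simp only [p, Pi.add_apply, Pi.smul_apply, smul_eq_mul]
    rw [min_eq_right (by linarith), max_eq_left (by linarith)]

lemma tendsto_sub_apply_of_tendsto_E_sub {g : X → ℝ} {w : ℕ → X → ℝ} (hg : g ∈ rf.F)
    (hw : ∀ n, w n ∈ rf.F) (hlim : Tendsto (fun n => rf.E (g - w n) (g - w n)) atTop (𝓝 0))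
    (x y : X) : Tendsto (fun n => w n x - w n y) atTop (𝓝 (g x - g y)) := by
  rw [tendsto_iff_norm_sub_tendsto_zero]
  refine squeeze_zero (fun _ => norm_nonneg _) (fun n => ?_)
    (by simpa using (hlim.mul_const (rf.rmetric x y)).sqrt)
  rw [Real.norm_eq_abs, ← Real.sqrt_sq_eq_abs]
  refine Real.sqrt_le_sqrt (le_of_eq_of_le ?_
    (rf.sq_sub_le_E_mul_rmetric (rf.sub_mem hg (hw n)) x y))
  simp only [Pi.sub_apply]
  ring

/-- Mazur's lemma, with pointwise convergence in place of weak convergence. -/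
theorem mem_F_and_exists_convexHull_tendsto {v : ℕ → X → ℝ} {vl : X → ℝ} {C : ℝ}
    (hv : ∀ m, v m ∈ rf.F) (hvC : ∀ m, rf.E (v m) (v m) ≤ C)
    (hpt : ∀ x, Tendsto (fun m => v m x) atTop (𝓝 (vl x))) :
    vl ∈ rf.F ∧ rf.E vl vl ≤ C ∧ ∃ w : ℕ → X → ℝ, (∀ n, w n ∈ convexHull ℝ (v '' Ici n)) ∧
      Tendsto (fun n => rf.E (vl - w n) (vl - w n)) atTop (𝓝 0) := by
  have hKC : ∀ n, convexHull ℝ (v '' Ici n) ⊆ {f | f ∈ rf.F ∧ rf.E f f ≤ C} := fun n =>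
    convexHull_min (by rintro _ ⟨m, -, rfl⟩; exact ⟨hv m, hvC m⟩) (rf.convex_setOf_E_le C)
  obtain ⟨w, hwK, g, hg, hgw⟩ := rf.exists_tendsto_of_antitone_convex
    (fun m n hmn => convexHull_mono (image_mono (Ici_subset_Ici.2 hmn)))
    (fun n => convex_convexHull ℝ _) (fun n f hf => (hKC n hf).1)
    (fun n => ⟨v n, subset_convexHull ℝ _ ⟨n, mem_Ici.2 le_rfl, rfl⟩⟩) (fun n f hf => (hKC n hf).2)
  have hwF := fun n => (hKC n (hwK n)).1
  obtain ⟨c, rfl⟩ : ∃ c : ℝ, vl = g + fun _ => c := exists_eq_add_const fun x y => by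
    have := tendsto_nhds_unique ((tendsto_apply_of_mem_convexHull (hpt x) hwK).sub
      (tendsto_apply_of_mem_convexHull (hpt y) hwK))
      (rf.tendsto_sub_apply_of_tendsto_E_sub hg hwF hgw x y)
    linarith
  refine ⟨rf.add_mem hg (rf.const_mem c), ?_, w, hwK, ?_⟩
  · rw [rf.E_add_const_self hg]
    exact le_of_tendsto' (rf.tendsto_E_of_tendsto_E_sub hg hwF hgw) fun n => (hKC n (hwK n)).2
  · simpa only [add_sub_right_comm, rf.E_add_const_self (rf.sub_mem hg (hwF _))] using hgw

lemma truncation_mem {a : ℝ} (ha : 0 < a) (hu : u ∈ rf.F) :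
    (fun x => max 0 (min a (u x))) ∈ rf.F ∧
      rf.E (fun x => max 0 (min a (u x))) (fun x => max 0 (min a (u x))) ≤ rf.E u u := by
  have hv := rf.smul_mem a⁻¹ hu
  obtain ⟨hcF, hcE⟩ := rf.markov _ hv
  have heq : (fun x => max 0 (min a (u x))) = a • fun x => max 0 (min 1 ((a⁻¹ • u) x)) := by
    funext x
    simp [mul_max_of_nonneg _ _ ha.le, mul_min_of_nonneg _ _ ha.le, ha.ne']
  rw [heq, rf.E_smul_self a hcF]
  refine ⟨rf.smul_mem a hcF, ?_⟩
  calc a ^ 2 * _ ≤ a ^ 2 * rf.E (a⁻¹ • u) (a⁻¹ • u) := by gcongr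
    _ = rf.E u u := by rw [rf.E_smul_self _ hu]; field_simp

lemma posPart_mem (hu : u ∈ rf.F) :
    (fun x => max 0 (u x)) ∈ rf.F ∧
      rf.E (fun x => max 0 (u x)) (fun x => max 0 (u x)) ≤ rf.E u u := by
  refine (rf.mem_F_and_exists_convexHull_tendsto
    (fun m => (rf.truncation_mem (Nat.cast_add_one_pos m) hu).1)
    (fun m => (rf.truncation_mem (Nat.cast_add_one_pos m) hu).2) fun x => ?_).imp_right And.left
  refine tendsto_const_nhds.congr' ((eventually_ge_atTop ⌈u x⌉₊).mono fun m hm => ?_)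
  have : u x ≤ (m : ℝ) + 1 := (Nat.le_ceil _).trans (by exact_mod_cast hm.trans m.le_succ)
  simp [min_eq_right this]

lemma E_posPart_sub_nonpos (hu : u ∈ rf.F) :
    rf.E (fun x => max 0 (u x)) ((fun x => max 0 (u x)) - u) ≤ 0 := by
  set p := fun x => max 0 (u x)
  have hp := (rf.posPart_mem hu).1
  have hn := rf.sub_mem hp hu
  -- `p - s (p - u)` has positive part `p`, for every `s > 0`
  have key : ∀ s : ℝ, 0 < s → 2 * rf.E p (p - u) ≤ s * rf.E (p - u) (p - u) := by
    intro s hs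
    have hpos : (fun x => max 0 ((p - s • (p - u)) x)) = p := by
      funext x
      simp only [p, Pi.sub_apply, Pi.smul_apply, smul_eq_mul]
      rcases le_total 0 (u x) with h | h
      · simp [max_eq_right h]
      · rw [max_eq_left h, zero_sub, zero_sub, mul_neg, neg_neg,
          max_eq_left (mul_nonpos_of_nonneg_of_nonpos hs.le h)]
    have := (rf.posPart_mem (rf.sub_mem hp (rf.smul_mem s hn))).2
    rw [hpos, rf.E_sub_self hp (rf.smul_mem s hn), rf.E_smul_right s hp hn,
      rf.E_smul_self s hn] at this
    nlinarith
  have hlim : Tendsto (fun s : ℝ => s * rf.E (p - u) (p - u)) (𝓝[>] 0) (𝓝 0) := by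
    simpa using ((tendsto_id (x := 𝓝 (0 : ℝ))).mul_const (rf.E (p - u) (p - u))).mono_left
      nhdsWithin_le_nhds
  linarith [ge_of_tendsto hlim (eventually_nhdsWithin_of_forall key)]

lemma min_max_mem {f g : X → ℝ} (hf : f ∈ rf.F) (hg : g ∈ rf.F) :
    (fun x => min (f x) (g x)) ∈ rf.F ∧ (fun x => max (f x) (g x)) ∈ rf.F ∧
      rf.E (fun x => min (f x) (g x)) (fun x => min (f x) (g x)) +
        rf.E (fun x => max (f x) (g x)) (fun x => max (f x) (g x)) ≤ rf.E f f + rf.E g g := by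
  have hfg := rf.sub_mem hf hg
  set p := fun x => max 0 ((f - g) x)
  have hp := (rf.posPart_mem hfg).1
  have hmin : (fun x => min (f x) (g x)) = f - p := by
    funext x
    simp only [p, Pi.sub_apply]
    rcases le_total (f x) (g x) with h | h
    · rw [min_eq_left h, max_eq_left (by linarith)]; ring
    · rw [min_eq_right h, max_eq_right (by linarith)]; ring
  have hmax : (fun x => max (f x) (g x)) = g + p := by
    funext x
    simp only [p, Pi.add_apply, Pi.sub_apply]
    rcases le_total (f x) (g x) with h | h
    · rw [max_eq_right h, max_eq_left (by linarith)]; ring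
    · rw [max_eq_left h, max_eq_right (by linarith)]; ring
  rw [hmin, hmax]
  refine ⟨rf.sub_mem hf hp, rf.add_mem hg hp, ?_⟩
  have hneg := rf.E_posPart_sub_nonpos hfg
  rw [rf.E_sub_right hp hp hfg, rf.E_sub_right hp hf hg] at hneg
  rw [rf.E_sub_self hf hp, rf.E_add_self hg hp, rf.symm f hf p hp, rf.symm g hg p hp]
  linarith

def minOne {ι : Type*} (s : Finset ι) (f : ι → X → ℝ) (x : X) : ℝ := s.fold min 1 (f · x)

section MinOne

variable {ι : Type*} {s t : Finset ι} {f : ι → X → ℝ} {x : X}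

lemma minOne_eq_one (h : ∀ i ∈ s, f i x = 1) : minOne s f x = 1 :=
  le_antisymm ((Finset.fold_min_le _).2 (Or.inl le_rfl))
    ((Finset.le_fold_min _).2 ⟨le_rfl, fun i hi => (h i hi).ge⟩)

lemma minOne_nonneg (h : ∀ i ∈ s, 0 ≤ f i x) : 0 ≤ minOne s f x :=
  (Finset.le_fold_min _).2 ⟨zero_le_one, h⟩

lemma minOne_le {i : ι} (hi : i ∈ s) : minOne s f x ≤ f i x :=
  (Finset.fold_min_le _).2 (Or.inr ⟨i, hi, le_rfl⟩)

lemma minOne_anti (hst : s ⊆ t) : minOne t f x ≤ minOne s f x :=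
  (Finset.le_fold_min _).2 ⟨((Finset.le_fold_min _).1 le_rfl).1,
    fun _ hi => minOne_le (hst hi)⟩

lemma minOne_mem (s : Finset ι) (hf : ∀ i ∈ s, f i ∈ rf.F) :
    minOne s f ∈ rf.F ∧ rf.E (minOne s f) (minOne s f) ≤ ∑ i ∈ s, rf.E (f i) (f i) := by
  classical
  induction s using Finset.induction_on with
  | empty =>
    have h1 : minOne ∅ f = fun _ => 1 := rfl
    exact ⟨h1 ▸ rf.const_mem 1, by simp [h1, rf.E_const_self]⟩
  | insert i s hi ih =>
    obtain ⟨hsF, hsE⟩ := ih fun j hj => hf j (Finset.mem_insert_of_mem hj)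
    have heq : minOne (insert i s) f = fun x => min (f i x) (minOne s f x) :=
      funext fun x => Finset.fold_insert hi
    obtain ⟨hmin, hmax, hE⟩ := rf.min_max_mem (hf i (Finset.mem_insert_self i s)) hsF
    rw [heq, Finset.sum_insert hi]
    exact ⟨hmin, by linarith [rf.nonneg _ hmax]⟩

end MinOne

def clip (u ψ : X → ℝ) (x : X) : ℝ := max (min (u x) (ψ x)) (-ψ x)

lemma clip_mem {ψ : X → ℝ} (hu : u ∈ rf.F) (hψ : ψ ∈ rf.F) :
    clip u ψ ∈ rf.F ∧ rf.E (clip u ψ) (clip u ψ) ≤ rf.E u u + 2 * rf.E ψ ψ := by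
  obtain ⟨hmin, hmax₁, hE₁⟩ := rf.min_max_mem hu hψ
  obtain ⟨hmin₂, hmax, hE₂⟩ := rf.min_max_mem hmin (rf.neg_mem hψ)
  have hneg : rf.E (-ψ) (-ψ) = rf.E ψ ψ := by
    rw [← neg_one_smul ℝ ψ, rf.E_smul_self _ hψ]
    norm_num
  have hclip : clip u ψ = fun x => max (min (u x) (ψ x)) ((-ψ) x) := rfl
  rw [hclip]
  exact ⟨hmax, by linarith [rf.nonneg _ hmax₁, rf.nonneg _ hmin₂]⟩

lemma clip_eq_of_abs_le {ψ : X → ℝ} {x : X} (h : |u x| ≤ ψ x) : clip u ψ x = u x := by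
  rw [clip, min_eq_left (abs_le.1 h).2, max_eq_left (abs_le.1 h).1]

lemma support_clip_subset {ψ : X → ℝ} (hψ : ∀ x, 0 ≤ ψ x) :
    Function.support (clip u ψ) ⊆ Function.support u ∩ Function.support ψ := by
  intro x hx
  refine ⟨fun hu => hx ?_, fun hψ0 => hx ?_⟩
  · simp [clip, hu, hψ x]
  · simp [clip, hψ0]

lemma convex_setOf_hasCompactSupport [TopologicalSpace X] (u : X → ℝ) :
    Convex ℝ {f | f ∈ rf.F ∧ HasCompactSupport f ∧ tsupport f ⊆ tsupport u} := by
  rintro f ⟨hf, hfc, hfu⟩ g ⟨hg, hgc, hgu⟩ a b ha hb hab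
  refine ⟨rf.convex_F hf hg ha hb hab, ?_, ?_⟩
  · exact (hfc.mono (Function.support_const_smul_subset a f)).add
      (hgc.mono (Function.support_const_smul_subset b g))
  · refine closure_minimal ((Function.support_add _ _).trans (union_subset ?_ ?_))
      (isClosed_tsupport u)
    · exact ((Function.support_const_smul_subset a f).trans (subset_tsupport f)).trans hfu
    · exact ((Function.support_const_smul_subset b g).trans (subset_tsupport g)).trans hgu

section Metric

variable [MetricSpace X] (hR : ∀ x y : X, dist x y = rf.rmetric x y)
include hR

lemma continuous_of_mem (hu : u ∈ rf.F) : Continuous u := by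
  refine continuous_iff_continuousAt.2 fun x => tendsto_iff_norm_sub_tendsto_zero.2 ?_
  refine squeeze_zero (fun _ => norm_nonneg _) (fun y => ?_)
    (g := fun y => √(rf.E u u * dist y x)) ?_
  · rw [Real.norm_eq_abs, ← Real.sqrt_sq_eq_abs, hR]
    exact Real.sqrt_le_sqrt (rf.sq_sub_le_E_mul_rmetric hu y x)
  · simpa using ((tendsto_id (x := 𝓝 x)).dist (tendsto_const_nhds (x := x))
      |>.const_mul (rf.E u u)).sqrt

lemma exists_cutoff_off_ball (x₀ z : X) {r : ℝ} (hr : 0 < r) :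
    ∃ g ∈ rf.F, g x₀ = 1 ∧ (∀ y, 0 ≤ g y) ∧ rf.E g g ≤ 8 / r ∧
      ∀ y, r ≤ dist x₀ y → dist z y < r / 16 → g y = 0 := by
  by_cases hp : ∃ p, r ≤ dist x₀ p ∧ dist z p < r / 16
  · obtain ⟨p, hrp, hzp⟩ := hp
    have hp0 : 0 < dist x₀ p := hr.trans_le hrp
    obtain ⟨q, hqF, hqx, hq0, hqE, hqvan⟩ := rf.exists_bump (dist_pos.1 hp0)
    rw [← hR] at hqE
    refine ⟨q, hqF, hqx, hq0, hqE.trans (by gcongr), fun y _ hzy => hqvan y ?_⟩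
    rw [← hR, ← hR]
    linarith [dist_triangle_left y p z]
  · push Not at hp
    exact ⟨fun _ => 1, rf.const_mem 1, rfl, fun _ => zero_le_one, by
      rw [rf.E_const_self]; positivity, fun y hy hzy => absurd hzy (hp y hy).not_gt⟩

lemma exists_annulus_cutoff {N : ℕ} (hN : ∀ (x : X) (r : ℝ), ∃ s : Finset X, s.card ≤ N ∧
      {y | dist x y < 2 * r} ⊆ ⋃ z ∈ s, {y | dist z y < r}) (x₀ : X) {r : ℝ} (hr : 0 < r) :
    ∃ g ∈ rf.F, g x₀ = 1 ∧ (∀ y, 0 ≤ g y) ∧ rf.E g g ≤ 8 * N ^ 5 / r ∧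
      ∀ y, r ≤ dist x₀ y → dist x₀ y < 2 * r → g y = 0 := by
  obtain ⟨s, hs, hcov⟩ := exists_finset_cover_pow hN 5 x₀ (r / 16)
  choose f hfF hfx hf0 hfE hfvan using fun z => rf.exists_cutoff_off_ball hR x₀ z hr
  obtain ⟨hgF, hgE⟩ := rf.minOne_mem s fun z _ => hfF z
  refine ⟨minOne s f, hgF, minOne_eq_one fun z _ => hfx z,
    fun y => minOne_nonneg fun z _ => hf0 z y, ?_, fun y hy₁ hy₂ => ?_⟩
  · calc _ ≤ ∑ z ∈ s, rf.E (f z) (f z) := hgE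
      _ ≤ s.card * (8 / r) := by simpa using Finset.sum_le_card_nsmul s _ _ fun z _ => hfE z
      _ ≤ N ^ 5 * (8 / r) := by gcongr; exact_mod_cast hs
      _ = 8 * N ^ 5 / r := by ring
  · obtain ⟨z, hz, hzy⟩ := mem_iUnion₂.1 (hcov (show dist x₀ y < 2 ^ 5 * (r / 16) by linarith))
    exact le_antisymm ((minOne_le hz).trans (hfvan z y hy₁ hzy).le)
      (minOne_nonneg fun z _ => hf0 z y)

lemma exists_cutoff (hdb : DoublingOf fun x y : X => dist x y) (x₀ : X) :
    ∃ C > 0, ∀ ρ > 0, ∃ φ ∈ rf.F, φ x₀ = 1 ∧ (∀ y, 0 ≤ φ y) ∧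
      (∀ y, ρ ≤ dist x₀ y → φ y = 0) ∧ rf.E φ φ ≤ C / ρ := by
  obtain ⟨N, hN⟩ := hdb
  refine ⟨16 * N ^ 5 + 1, by positivity, fun ρ hρ => ?_⟩
  choose g hgF hgx hg0 hgE hgvan using fun k : ℕ =>
    rf.exists_annulus_cutoff hR hN x₀ (r := 2 ^ k * ρ) (by positivity)
  -- `w K` vanishes on the annuli `2 ^ k ρ ≤ dist x₀ · < 2 ^ (k + 1) ρ`, `k ≤ K`
  set w : ℕ → X → ℝ := fun K => minOne (Finset.range (K + 1)) g
  have hw := fun K => rf.minOne_mem (Finset.range (K + 1)) fun k _ => hgF k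
  have hw0 : ∀ K y, 0 ≤ w K y := fun K y => minOne_nonneg fun k _ => hg0 k y
  have hwE : ∀ K, rf.E (w K) (w K) ≤ (16 * N ^ 5 + 1) / ρ := fun K => calc
    _ ≤ ∑ k ∈ Finset.range (K + 1), rf.E (g k) (g k) := (hw K).2
    _ ≤ ∑ k ∈ Finset.range (K + 1), 8 * N ^ 5 / ρ * (1 / 2) ^ k :=
        Finset.sum_le_sum fun k _ => (hgE k).trans_eq (by rw [one_div_pow]; field_simp)
    _ ≤ 8 * N ^ 5 / ρ * 2 := by rw [← Finset.mul_sum]; gcongr; exact sum_geometric_two_le _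
    _ ≤ (16 * N ^ 5 + 1) / ρ := by rw [div_mul_eq_mul_div]; gcongr; linarith
  have hbdd : ∀ y, BddBelow (range fun K => w K y) := fun y =>
    ⟨0, by rintro _ ⟨K, rfl⟩; exact hw0 K y⟩
  obtain ⟨hφF, hφE, -⟩ := rf.mem_F_and_exists_convexHull_tendsto (fun K => (hw K).1) hwE
    fun y => tendsto_atTop_ciInf (fun K L hKL => minOne_anti (by gcongr)) (hbdd y)
  refine ⟨fun y => ⨅ K, w K y, hφF, by simp [w, minOne_eq_one fun k _ => hgx k],
    fun y => le_ciInf fun K => hw0 K y, fun y hy => ?_, hφE⟩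
  obtain ⟨k, hk₁, hk₂⟩ := exists_nat_pow_near ((one_le_div hρ).2 hy) one_lt_two
  rw [le_div_iff₀ hρ] at hk₁
  rw [div_lt_iff₀ hρ, pow_succ] at hk₂
  refine le_antisymm ((ciInf_le (hbdd y) k).trans ((minOne_le (Finset.self_mem_range_succ k)).trans
    (hgvan k y hk₁ (by linarith)).le)) (le_ciInf fun K => hw0 K y)

lemma exists_scaled_cutoff [ProperSpace X] (hdb : DoublingOf fun x y : X => dist x y) (x₀ : X)
    {a : ℝ} (ha : 1 ≤ a) :
    ∃ ψ ∈ rf.F, HasCompactSupport ψ ∧ (∀ z, 0 ≤ ψ z) ∧ rf.E ψ ψ ≤ 1 / 4 ∧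
      ∀ z, dist x₀ z ≤ a → a / 2 ≤ ψ z := by
  obtain ⟨C, hC, hcut⟩ := rf.exists_cutoff hR hdb x₀
  obtain ⟨φ, hφF, hφx, hφ0, hφvan, hφE⟩ := hcut (4 * C * a ^ 2) (by positivity)
  have hφE' : rf.E φ φ ≤ 1 / (4 * a ^ 2) := hφE.trans_eq (by field_simp)
  refine ⟨a • φ, rf.smul_mem a hφF, ?_, fun z => mul_nonneg (by linarith) (hφ0 z), ?_,
    fun z hz => ?_⟩
  · refine HasCompactSupport.intro (isCompact_closedBall x₀ (4 * C * a ^ 2)) fun z hz => ?_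
    rw [mem_closedBall, not_le, dist_comm] at hz
    simp [hφvan z hz.le]
  · rw [rf.E_smul_self a hφF]
    calc a ^ 2 * rf.E φ φ ≤ a ^ 2 * (1 / (4 * a ^ 2)) := by gcongr
      _ = 1 / 4 := by field_simp
  · -- Hölder continuity at `x₀` keeps `φ ≥ 1/2` on the ball of radius `a`
    have hhol := rf.sq_sub_le_E_mul_rmetric hφF x₀ z
    rw [← hR, hφx] at hhol
    have : (1 - φ z) ^ 2 ≤ 1 / 4 := by
      calc (1 - φ z) ^ 2 ≤ 1 / (4 * a ^ 2) * a := hhol.trans (by gcongr)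
        _ ≤ 1 / 4 := by
          rw [div_mul_eq_mul_div, div_le_div_iff₀ (by positivity) (by norm_num)]
          nlinarith
    have : 1 / 2 ≤ φ z := by nlinarith
    simp only [Pi.smul_apply, smul_eq_mul]
    nlinarith

lemma exists_hasCompactSupport_tendsto [ProperSpace X]
    (hdb : DoublingOf fun x y : X => dist x y) (x₀ : X) (hu : u ∈ rf.F) :
    ∃ t : ℕ → X → ℝ, (∀ m, t m ∈ rf.F ∧ HasCompactSupport (t m) ∧ tsupport (t m) ⊆ tsupport u ∧
        rf.E (t m) (t m) ≤ rf.E u u + 1 / 2) ∧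
      ∀ x, Tendsto (fun m => t m x) atTop (𝓝 (u x)) := by
  choose ψ hψF hψc hψ0 hψE hψge using fun m : ℕ =>
    rf.exists_scaled_cutoff hR hdb x₀ (a := m + 1) (by simp)
  refine ⟨fun m => clip u (ψ m), fun m => ?_, fun x => ?_⟩
  · obtain ⟨hF, hE⟩ := rf.clip_mem hu (hψF m)
    have hsupp := support_clip_subset (u := u) (hψ0 m)
    exact ⟨hF, (hψc m).mono fun x hx => (hsupp hx).2, closure_mono fun x hx => (hsupp hx).1,
      by linarith [hψE m]⟩
  · refine tendsto_const_nhds.congr' ((eventually_ge_atTop ⌈max (dist x₀ x) (2 * |u x|)⌉₊).mono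
      fun m hm => (clip_eq_of_abs_le ?_).symm)
    have hm' : max (dist x₀ x) (2 * |u x|) ≤ m := (Nat.le_ceil _).trans (by exact_mod_cast hm)
    have := hψge m x (by linarith [le_max_left (dist x₀ x) (2 * |u x|)])
    linarith [le_max_right (dist x₀ x) (2 * |u x|)]

end Metric

end ResistanceForm

/-- Suppose the resistance metric `R` is complete and doubling.  For
every `u ∈ F` there is a sequence `{u_n} ⊆ F ∩ C₀(X,R)` with `supp(u_n) ⊆ supp(u)` and
`E(u − u_n, u − u_n) → 0`. -/
theorem dense_compactly_supported_approx {X : Type*} [MetricSpace X] [CompleteSpace X]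
    (rf : ResistanceForm X) (hR : ∀ x y : X, dist x y = rf.rmetric x y)
    (hdb : DoublingOf fun x y : X => dist x y)
    (u : X → ℝ) (hu : u ∈ rf.F) :
    ∃ un : ℕ → X → ℝ,
      (∀ n, un n ∈ rf.F ∧ Continuous (un n) ∧ HasCompactSupport (un n) ∧
        tsupport (un n) ⊆ tsupport u) ∧
      Tendsto (fun n => rf.E (u - un n) (u - un n)) atTop (𝓝 0) := by
  rcases isEmpty_or_nonempty X with hX | ⟨⟨x₀⟩⟩
  · refine ⟨0, fun _ => ⟨rf.zero_mem, continuous_const, .zero, by simp⟩, ?_⟩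
    simp [(rf.null_iff_const u hu).2 ⟨0, isEmptyElim⟩]
  have := properSpace_of_doublingOf hdb
  obtain ⟨t, ht, hpt⟩ := rf.exists_hasCompactSupport_tendsto hR hdb x₀ hu
  obtain ⟨-, -, w, hw, hlim⟩ :=
    rf.mem_F_and_exists_convexHull_tendsto (fun m => (ht m).1) (fun m => (ht m).2.2.2) hpt
  refine ⟨w, fun n => ?_, hlim⟩
  obtain ⟨hwF, hwc, hws⟩ := convexHull_min
    (by rintro _ ⟨m, -, rfl⟩; exact ⟨(ht m).1, (ht m).2.1, (ht m).2.2.1⟩)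
    (rf.convex_setOf_hasCompactSupport u) (hw n)
  exact ⟨hwF, rf.continuous_of_mem hR hwF, hwc, hws⟩
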